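/- Let n ≥ 1, let O ⊆ ℂ be open, and let u : ℂ → ℂⁿ be twice continuously differentiable on O (regarding ℂ ≅ ℝ², with ∂₁, ∂₂ the partial derivatives in the real and imaginary coordinate directions). Assume on O: (i) isotropy: ⟨J ∂₁u, ∂₂u⟩ = 0, and (ii) the Hamiltonian stationarity condition ⟨J u, ∂₁∂₁u + ∂₂∂₂u⟩ = 0. Then the function F : O → ℂ defined by F(w) = ⟨J u(w), ∂₁u(w)⟩ − i·⟨J u(w), ∂₂u(w)⟩ satisfies the Cauchy–Riemann equation ∂₁F + i ∂₂F = 0 on O; equivalently, F is complex differentiable (holomorphic) on O. -/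

import Mathlib

/-- The standard complex structure `J x = i • x` on `ℂⁿ`. -/
noncomputable def Jc {n : ℕ} (x : EuclideanSpace ℂ (Fin n)) : EuclideanSpace ℂ (Fin n) :=
  Complex.I • x

/-- The real inner product `⟨x, y⟩ = Re ⟪x, y⟫` on `ℂⁿ`. -/
noncomputable def rinner {n : ℕ} (x y : EuclideanSpace ℂ (Fin n)) : ℝ :=
  (inner ℂ x y : ℂ).re

/-- Partial derivative in the real coordinate direction for a map on `ℂ ≅ ℝ²`. -/
noncomputable def pd1 {E : Type*} [NormedAddCommGroup E] [NormedSpace ℝ E]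
    (f : ℂ → E) (w : ℂ) : E :=
  fderiv ℝ f w 1

/-- Partial derivative in the imaginary coordinate direction for a map on `ℂ ≅ ℝ²`. -/
noncomputable def pd2 {E : Type*} [NormedAddCommGroup E] [NormedSpace ℝ E]
    (f : ℂ → E) (w : ℂ) : E :=
  fderiv ℝ f w Complex.I

/-!
Write `ω(x, y) = ⟨J x, y⟩ = Im ⟪x, y⟫`, a skew-symmetric real bilinear form, so that
`F = ω(u, ∂₁u) - i ω(u, ∂₂u)`. Differentiating with the product rule, the terms `ω(∂ⱼu, ∂ⱼu)`
vanish, the real part of `∂₁F + i ∂₂F` is `ω(u, Δu) = 0` (Hamiltonian stationarity), and, since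
the mixed second derivatives of `u` agree, its imaginary part is `ω(∂₂u, ∂₁u) - ω(∂₁u, ∂₂u)
= -2 ω(∂₁u, ∂₂u) = 0` (isotropy). A real-differentiable function satisfying the Cauchy–Riemann
equation is holomorphic.
-/

open Complex

section SymplecticForm

variable {n : ℕ}

lemma rinner_Jc_eq_im (x y : EuclideanSpace ℂ (Fin n)) :
    rinner (Jc x) y = (inner ℂ x y).im := by
  simp [rinner, Jc, mul_re]

lemma rinner_Jc_self (x : EuclideanSpace ℂ (Fin n)) : rinner (Jc x) x = 0 := by
  simpa [rinner_Jc_eq_im] using inner_self_im (𝕜 := ℂ) x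

lemma rinner_Jc_swap (x y : EuclideanSpace ℂ (Fin n)) : rinner (Jc y) x = -rinner (Jc x) y := by
  rw [rinner_Jc_eq_im, rinner_Jc_eq_im, ← inner_conj_symm, conj_im]

lemma rinner_Jc_add_right (x y z : EuclideanSpace ℂ (Fin n)) :
    rinner (Jc x) (y + z) = rinner (Jc x) y + rinner (Jc x) z := by
  simp only [rinner_Jc_eq_im, inner_add_right, add_im]

end SymplecticForm

section Calculus

variable {E : Type*} [NormedAddCommGroup E] [NormedSpace ℝ E] {w : E}

lemma HasFDerivAt.rinner_Jc {n : ℕ} {g h : E → EuclideanSpace ℂ (Fin n)}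
    {g' h' : E →L[ℝ] EuclideanSpace ℂ (Fin n)} (hg : HasFDerivAt g g' w)
    (hh : HasFDerivAt h h' w) :
    HasFDerivAt (fun y => rinner (Jc (g y)) (h y))
      (imCLM.comp ((fderivInnerCLM ℂ (g w, h w)).comp (g'.prod h'))) w := by
  simp only [rinner_Jc_eq_im]
  exact imCLM.hasFDerivAt.comp w (hg.inner ℂ hh)

lemma DifferentiableAt.rinner_Jc {n : ℕ} {g h : E → EuclideanSpace ℂ (Fin n)}
    (hg : DifferentiableAt ℝ g w) (hh : DifferentiableAt ℝ h w) :
    DifferentiableAt ℝ (fun y => rinner (Jc (g y)) (h y)) w :=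
  (hg.hasFDerivAt.rinner_Jc hh.hasFDerivAt).differentiableAt

lemma fderiv_rinner_Jc_apply {n : ℕ} {g h : E → EuclideanSpace ℂ (Fin n)}
    (hg : DifferentiableAt ℝ g w) (hh : DifferentiableAt ℝ h w) (d : E) :
    fderiv ℝ (fun y => rinner (Jc (g y)) (h y)) w d
      = rinner (Jc (fderiv ℝ g w d)) (h w) + rinner (Jc (g w)) (fderiv ℝ h w d) := by
  rw [(hg.hasFDerivAt.rinner_Jc hh.hasFDerivAt).fderiv]
  simp [rinner_Jc_eq_im, add_comm]

lemma fderiv_ofReal_sub_I_mul_apply {a b : E → ℝ} (ha : DifferentiableAt ℝ a w)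
    (hb : DifferentiableAt ℝ b w) (d : E) :
    fderiv ℝ (fun y => (a y : ℂ) - I * b y) w d = fderiv ℝ a w d - I * fderiv ℝ b w d := by
  have hF : HasFDerivAt (fun y => (a y : ℂ) - I * b y)
      (ofRealCLM.comp (fderiv ℝ a w) - I • ofRealCLM.comp (fderiv ℝ b w)) w :=
    (ofRealCLM.hasFDerivAt.comp w ha.hasFDerivAt).sub
      ((ofRealCLM.hasFDerivAt.comp w hb.hasFDerivAt).const_mul I)
  rw [hF.fderiv]
  simp

end Calculus

section PartialDerivatives

variable {E : Type*} [NormedAddCommGroup E] [NormedSpace ℝ E] {u : ℂ → E} {w : ℂ}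

lemma ContDiffAt.differentiableAt_fderiv_apply (hu : ContDiffAt ℝ 2 u w) (d : ℂ) :
    DifferentiableAt ℝ (fun y => fderiv ℝ u y d) w :=
  ((hu.fderiv_right (m := 1) (by norm_num)).differentiableAt one_ne_zero).clm_apply
    (differentiableAt_const d)

lemma ContDiffAt.fderiv_fderiv_apply (hu : ContDiffAt ℝ 2 u w) (d e : ℂ) :
    fderiv ℝ (fun y => fderiv ℝ u y e) w d = fderiv ℝ (fderiv ℝ u) w d e := by
  rw [fderiv_clm_apply ((hu.fderiv_right (m := 1) (by norm_num)).differentiableAt one_ne_zero)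
    (differentiableAt_const e)]
  simp

lemma ContDiffAt.pd1_pd2_comm (hu : ContDiffAt ℝ 2 u w) : pd1 (pd2 u) w = pd2 (pd1 u) w := by
  change fderiv ℝ (fun y => fderiv ℝ u y I) w 1 = fderiv ℝ (fun y => fderiv ℝ u y 1) w I
  rw [hu.fderiv_fderiv_apply, hu.fderiv_fderiv_apply]
  exact hu.isSymmSndFDerivAt (by simp) 1 I

end PartialDerivatives

lemma differentiableAt_complex_of_pd1_add_I_smul_pd2 {E : Type*} [NormedAddCommGroup E]
    [NormedSpace ℂ E] {f : ℂ → E} {w : ℂ} (hf : DifferentiableAt ℝ f w)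
    (hCR : pd1 f w + I • pd2 f w = 0) : DifferentiableAt ℂ f w := by
  refine differentiableAt_complex_iff_differentiableAt_real.2 ⟨hf, ?_⟩
  have hI := congrArg (I • ·) hCR
  simp only [smul_add, smul_smul, I_mul_I, neg_one_smul, smul_zero] at hI
  rw [pd1, pd2] at hI
  linear_combination (norm := module) -hI

section HopfFunction

variable {n : ℕ}

noncomputable def hopfFunction (u : ℂ → EuclideanSpace ℂ (Fin n)) (w : ℂ) : ℂ :=
  rinner (Jc (u w)) (pd1 u w) - I * rinner (Jc (u w)) (pd2 u w)

variable {u : ℂ → EuclideanSpace ℂ (Fin n)} {w : ℂ}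

lemma ContDiffAt.differentiableAt_hopfFunction (hu : ContDiffAt ℝ 2 u w) :
    DifferentiableAt ℝ (hopfFunction u) w := by
  have hu₁ : DifferentiableAt ℝ u w := hu.differentiableAt two_ne_zero
  have ha := hu₁.rinner_Jc (hu.differentiableAt_fderiv_apply 1)
  have hb := hu₁.rinner_Jc (hu.differentiableAt_fderiv_apply I)
  exact (ofRealCLM.differentiableAt.comp w ha).sub
    ((ofRealCLM.differentiableAt.comp w hb).const_mul I)

lemma ContDiffAt.fderiv_hopfFunction_apply (hu : ContDiffAt ℝ 2 u w) (d : ℂ) :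
    fderiv ℝ (hopfFunction u) w d =
      (rinner (Jc (fderiv ℝ u w d)) (pd1 u w) + rinner (Jc (u w)) (fderiv ℝ (pd1 u) w d) : ℝ)
      - I * (rinner (Jc (fderiv ℝ u w d)) (pd2 u w)
        + rinner (Jc (u w)) (fderiv ℝ (pd2 u) w d) : ℝ) := by
  have hu₁ : DifferentiableAt ℝ u w := hu.differentiableAt two_ne_zero
  have hu₁₁ : DifferentiableAt ℝ (pd1 u) w := hu.differentiableAt_fderiv_apply 1
  have hu₁₂ : DifferentiableAt ℝ (pd2 u) w := hu.differentiableAt_fderiv_apply I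
  unfold hopfFunction
  rw [fderiv_ofReal_sub_I_mul_apply (hu₁.rinner_Jc hu₁₁) (hu₁.rinner_Jc hu₁₂),
    fderiv_rinner_Jc_apply hu₁ hu₁₁, fderiv_rinner_Jc_apply hu₁ hu₁₂]

lemma ContDiffAt.pd1_hopfFunction_add_I_mul_pd2 (hu : ContDiffAt ℝ 2 u w)
    (hiso : rinner (Jc (pd1 u w)) (pd2 u w) = 0)
    (hHS : rinner (Jc (u w)) (pd1 (pd1 u) w + pd2 (pd2 u) w) = 0) :
    pd1 (hopfFunction u) w + I * pd2 (hopfFunction u) w = 0 := by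
  have h₁ : pd1 (hopfFunction u) w =
      (rinner (Jc (pd1 u w)) (pd1 u w) + rinner (Jc (u w)) (pd1 (pd1 u) w) : ℝ)
      - I * (rinner (Jc (pd1 u w)) (pd2 u w) + rinner (Jc (u w)) (pd1 (pd2 u) w) : ℝ) :=
    hu.fderiv_hopfFunction_apply 1
  have h₂ : pd2 (hopfFunction u) w =
      (rinner (Jc (pd2 u w)) (pd1 u w) + rinner (Jc (u w)) (pd2 (pd1 u) w) : ℝ)
      - I * (rinner (Jc (pd2 u w)) (pd2 u w) + rinner (Jc (u w)) (pd2 (pd2 u) w) : ℝ) :=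
    hu.fderiv_hopfFunction_apply I
  have hΔ : (rinner (Jc (u w)) (pd1 (pd1 u) w) : ℂ) + rinner (Jc (u w)) (pd2 (pd2 u) w) = 0 := by
    exact_mod_cast (rinner_Jc_add_right _ _ _).symm.trans hHS
  rw [h₁, h₂, hu.pd1_pd2_comm, rinner_Jc_self, rinner_Jc_self,
    rinner_Jc_swap (pd1 u w) (pd2 u w), hiso]
  push_cast
  linear_combination hΔ - (rinner (Jc (u w)) (pd2 (pd2 u) w) : ℂ) * I_sq

theorem hopf_function_holomorphic_general (n : ℕ)
    (O : Set ℂ) (hO : IsOpen O)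
    (u : ℂ → EuclideanSpace ℂ (Fin n))
    (hu : ContDiffOn ℝ 2 u O)
    (hiso : ∀ w ∈ O, rinner (Jc (pd1 u w)) (pd2 u w) = 0)
    (hHS : ∀ w ∈ O, rinner (Jc (u w)) (pd1 (pd1 u) w + pd2 (pd2 u) w) = 0)
    (F : ℂ → ℂ)
    (hF : ∀ w, F w = (rinner (Jc (u w)) (pd1 u w) : ℂ)
      - Complex.I * (rinner (Jc (u w)) (pd2 u w) : ℂ)) :
    (∀ w ∈ O, pd1 F w + Complex.I * pd2 F w = 0) ∧ DifferentiableOn ℂ F O := by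
  obtain rfl : F = hopfFunction u := funext hF
  have hu₂ : ∀ w ∈ O, ContDiffAt ℝ 2 u w := fun w hw => hu.contDiffAt (hO.mem_nhds hw)
  have hCR : ∀ w ∈ O, pd1 (hopfFunction u) w + I * pd2 (hopfFunction u) w = 0 := fun w hw =>
    (hu₂ w hw).pd1_hopfFunction_add_I_mul_pd2 (hiso w hw) (hHS w hw)
  refine ⟨hCR, fun w hw => DifferentiableAt.differentiableWithinAt ?_⟩
  exact differentiableAt_complex_of_pd1_add_I_smul_pd2 (hu₂ w hw).differentiableAt_hopfFunction
    (hCR w hw)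

/-- For a `C²` isotropic map `u : ℂ → ℂⁿ` on an open set `O` satisfying the Hamiltonian
stationarity condition `⟨Ju, ∂₁∂₁u + ∂₂∂₂u⟩ = 0`, the Hopf-type function
`F = ⟨Ju, ∂₁u⟩ - i⟨Ju, ∂₂u⟩` satisfies the Cauchy–Riemann equation `∂₁F + i∂₂F = 0` on `O`;
equivalently, `F` is holomorphic on `O`. -/
theorem hopf_function_holomorphic (n : ℕ) (hn : 1 ≤ n)
    (O : Set ℂ) (hO : IsOpen O)
    (u : ℂ → EuclideanSpace ℂ (Fin n))
    (hu : ContDiffOn ℝ 2 u O)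
    (hiso : ∀ w ∈ O, rinner (Jc (pd1 u w)) (pd2 u w) = 0)
    (hHS : ∀ w ∈ O, rinner (Jc (u w)) (pd1 (pd1 u) w + pd2 (pd2 u) w) = 0)
    (F : ℂ → ℂ)
    (hF : ∀ w, F w = (rinner (Jc (u w)) (pd1 u w) : ℂ)
      - Complex.I * (rinner (Jc (u w)) (pd2 u w) : ℂ)) :
    (∀ w ∈ O, pd1 F w + Complex.I * pd2 F w = 0) ∧ DifferentiableOn ℂ F O :=
  hopf_function_holomorphic_general n O hO u hu hiso hHS F hF
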